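/- Local contraction (concrete content of Proposition 9.5): suppose that (i) every finite path μ of E_A can be enlarged to a cycle, i.e. there is a finite path ν with source(ν) = target(μ) and target(ν) = source(μ); and (ii) E_A satisfies Condition (L). Then for every nonempty open subset U ⊆ X_A there exists a cycle c such that W_c ⊆ U and prepending c maps W_c properly into itself: {c·x : x ∈ W_c} ⊊ W_c. -/

import Mathlib

/-- An edge of the graph `E_A`: a triple `(i, j, n)` with `1 ≤ A i j` and `1 ≤ n ≤ A i j`,
with source `i` and target `j`. -/
structure Edge (ι : Type) (A : ι → ι → ℕ) : Type where
  src : ι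
  tgt : ι
  lab : ℕ
  pos : 1 ≤ A src tgt
  lab_pos : 1 ≤ lab
  lab_le : lab ≤ A src tgt

/-- The edge set carries the discrete topology. -/
instance (ι : Type) (A : ι → ι → ℕ) : TopologicalSpace (Edge ι A) := ⊥

/-- The infinite path space `X_A`, a subspace of the product `(Edge)^ℕ`. -/
abbrev PathSpace (ι : Type) (A : ι → ι → ℕ) : Type :=
  {x : ℕ → Edge ι A // ∀ k, (x k).tgt = (x (k + 1)).src}

/-- A list of edges is a finite path when consecutive edges are composable. -/
def IsPathList {ι : Type} {A : ι → ι → ℕ} (p : List (Edge ι A)) : Prop :=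
  p.Chain' fun e f => e.tgt = f.src

/-- Source of a nonempty finite path. -/
def pSrc {ι : Type} {A : ι → ι → ℕ} (p : List (Edge ι A)) (h : p ≠ []) : ι :=
  (p.head h).src

/-- Target of a nonempty finite path. -/
def pTgt {ι : Type} {A : ι → ι → ℕ} (p : List (Edge ι A)) (h : p ≠ []) : ι :=
  (p.getLast h).tgt

/-- Tail equivalence: `x ~ y` iff some shift of `x` equals some shift of `y`. -/
def TailEq {ι : Type} {A : ι → ι → ℕ} (x y : PathSpace ι A) : Prop :=
  ∃ p q : ℕ, ∀ k, x.1 (k + p) = y.1 (k + q)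

/-- The saturation of a set under tail equivalence. -/
def Sat {ι : Type} {A : ι → ι → ℕ} (C : Set (PathSpace ι A)) : Set (PathSpace ι A) :=
  {y | ∃ x ∈ C, TailEq y x}

/-- A set is invariant when it is closed under tail equivalence. -/
def Invariant {ι : Type} {A : ι → ι → ℕ} (U : Set (PathSpace ι A)) : Prop :=
  ∀ x ∈ U, ∀ y, TailEq y x → y ∈ U

/-- The cylinder set over a finite path `μ`: infinite paths beginning with `μ`. -/
def Cyl {ι : Type} {A : ι → ι → ℕ} (μ : List (Edge ι A)) : Set (PathSpace ι A) :=
  {x | ∀ t (ht : t < μ.length), x.1 t = μ.get ⟨t, ht⟩}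

/-- Prepending a finite path to an infinite sequence of edges. -/
def prepend {ι : Type} {A : ι → ι → ℕ} (μ : List (Edge ι A)) (x : ℕ → Edge ι A) :
    ℕ → Edge ι A := fun k =>
  if h : k < μ.length then μ.get ⟨k, h⟩ else x (k - μ.length)

/-- The shift `σ^p` on sequences of edges. -/
def shiftSeq {ι : Type} {A : ι → ι → ℕ} (p : ℕ) (x : ℕ → Edge ι A) : ℕ → Edge ι A :=
  fun k => x (k + p)

/-- The periodic sequence `K^∞` obtained by repeating a nonempty list `K`. -/
def repSeq {ι : Type} {A : ι → ι → ℕ} (K : List (Edge ι A)) (h : K ≠ []) :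
    ℕ → Edge ι A := fun k =>
  K.get ⟨k % K.length, Nat.mod_lt k (List.length_pos_iff.mpr h)⟩

/-- A cycle: a nonempty finite path whose target equals its source. -/
def IsCycle {ι : Type} {A : ι → ι → ℕ} (c : List (Edge ι A)) : Prop :=
  ∃ hc : c ≠ [], IsPathList c ∧ pTgt c hc = pSrc c hc

/-- A cycle (or any list of edges) has an exit when some edge `e` shares its source with an
edge of `c` but differs from it. -/
def HasExit {ι : Type} {A : ι → ι → ℕ} (c : List (Edge ι A)) : Prop :=
  ∃ (e : Edge ι A) (t : ℕ) (ht : t < c.length),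
    e.src = (c.get ⟨t, ht⟩).src ∧ e ≠ c.get ⟨t, ht⟩

/-- `Reaches ι A u v`: there is a (possibly trivial) finite path from `u` to `v` in `E_A`. -/
def Reaches (ι : Type) (A : ι → ι → ℕ) (u v : ι) : Prop :=
  u = v ∨ ∃ (p : List (Edge ι A)) (hp : p ≠ []), IsPathList p ∧ pSrc p hp = u ∧ pTgt p hp = v

section Aux

variable {ι : Type} {A : ι → ι → ℕ}

/-- A chosen outgoing edge from each vertex. -/
noncomputable def extEdge (hrow : ∀ i, ∃ j, 1 ≤ A i j) (i : ι) : Edge ι A :=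
  ⟨i, (hrow i).choose, 1, (hrow i).choose_spec, le_refl 1, (hrow i).choose_spec⟩

/-- An infinite path starting at a given vertex. -/
noncomputable def raySeq (hrow : ∀ i, ∃ j, 1 ≤ A i j) (v : ι) : ℕ → Edge ι A
  | 0 => extEdge hrow v
  | k+1 => extEdge hrow (raySeq hrow v k).tgt

lemma raySeq_valid (hrow : ∀ i, ∃ j, 1 ≤ A i j) (v : ι) (k : ℕ) :
    (raySeq hrow v k).tgt = (raySeq hrow v (k+1)).src := rfl

lemma get_congr (l : List (Edge ι A)) (i j : ℕ) (h : i = j) (hi : i < l.length) :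
    l.get ⟨i, hi⟩ = l.get ⟨j, h ▸ hi⟩ := by subst h; rfl

lemma prepend_valid (L : List (Edge ι A)) (hL : L ≠ []) (hP : IsPathList L)
    (w : ℕ → Edge ι A) (hw : ∀ k, (w k).tgt = (w (k+1)).src)
    (hjoin : (w 0).src = pTgt L hL) (k : ℕ) :
    (prepend L w k).tgt = (prepend L w (k+1)).src := by
  unfold prepend
  rcases lt_trichotomy (k+1) L.length with h | h | h
  · have hk : k < L.length := by omega
    rw [dif_pos hk, dif_pos h]
    exact List.isChain_iff_getElem.mp hP k (by omega)
  · have hk : k < L.length := by omega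
    rw [dif_pos hk, dif_neg (by omega)]
    have h0 : k + 1 - L.length = 0 := by omega
    rw [h0, hjoin]
    show (L.get ⟨k, hk⟩).tgt = (L.getLast hL).tgt
    simp only [List.get_eq_getElem, List.getLast_eq_getElem]
    congr 2
    omega
  · rw [dif_neg (by omega), dif_neg (by omega)]
    have h1 : k + 1 - L.length = (k - L.length) + 1 := by omega
    rw [h1]
    exact hw _

/-- Any finite path extends to an infinite path. -/
lemma exists_path_extension (hrow : ∀ i, ∃ j, 1 ≤ A i j) (L : List (Edge ι A))
    (hLne : L ≠ []) (hLp : IsPathList L) :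
    ∃ z : PathSpace ι A, ∀ s (hs : s < L.length), z.1 s = L.get ⟨s, hs⟩ := by
  refine ⟨⟨prepend L (raySeq hrow (pTgt L hLne)),
    prepend_valid L hLne hLp _ (raySeq_valid hrow _) rfl⟩, ?_⟩
  intro s hs
  show prepend L _ s = _
  rw [prepend, dif_pos hs]

/-- Going around a cycle, then up to the exit, then taking the exit, is a path. -/
lemma cycle_exit_path (c : List (Edge ι A)) (hcne : c ≠ []) (hcp : IsPathList c)
    (hcc : pTgt c hcne = pSrc c hcne) (e : Edge ι A) (t : ℕ) (ht : t < c.length)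
    (hesrc : e.src = (c.get ⟨t, ht⟩).src) :
    IsPathList (c ++ (c.take t ++ [e])) := by
  have hchain : ∀ i (h : i < c.length - 1), (c.get ⟨i, by omega⟩).tgt = (c.get ⟨i+1, by omega⟩).src :=
    fun i h => List.isChain_iff_getElem.mp hcp i (by omega)
  rw [IsPathList, List.Chain', List.isChain_append]
  refine ⟨hcp, ?_, ?_⟩
  · rw [List.isChain_append]
    refine ⟨hcp.take t, List.isChain_singleton e, ?_⟩
    intro a ha b hb
    simp only [List.head?_cons, Option.mem_def, Option.some.injEq] at hb
    subst hb
    rcases Nat.eq_zero_or_pos t with h0 | h0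
    · subst h0; simp at ha
    · have htake : c.take t ≠ [] := by
        intro hh; have := congrArg List.length hh
        simp only [List.length_take, List.length_nil] at this; omega
      rw [List.getLast?_eq_getLast htake, Option.mem_def, Option.some.injEq] at ha
      subst ha
      have h1 : t - 1 < c.length := by omega
      have hg : (c.take t).getLast htake = c.get ⟨t - 1, h1⟩ := by
        simp only [List.getLast_eq_getElem, List.getElem_take, List.get_eq_getElem, List.length_take]
        congr 1
        omega
      rw [hg, hesrc]
      have h2 := hchain (t - 1) (by omega)
      rwa [get_congr c (t - 1 + 1) t (by omega)] at h2
  · intro a ha b hb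
    rw [List.getLast?_eq_getLast hcne, Option.mem_def, Option.some.injEq] at ha
    subst ha
    have hMne : c.take t ++ [e] ≠ [] := by simp
    rw [List.head?_eq_head hMne, Option.mem_def, Option.some.injEq] at hb
    subst hb
    show (c.getLast hcne).tgt = ((c.take t ++ [e]).head hMne).src
    have hsrc0 : pSrc c hcne = (c.get ⟨0, by omega⟩).src := by
      unfold pSrc
      rw [List.head_eq_getElem]
      rfl
    have hhead : ((c.take t ++ [e]).head hMne).src = pSrc c hcne := by
      rcases Nat.eq_zero_or_pos t with h0 | h0
      · subst h0
        simp only [List.take_zero, List.nil_append, List.head_cons]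
        rw [hesrc, hsrc0]
      · have htake : c.take t ≠ [] := by
          intro hh; have := congrArg List.length hh
          simp only [List.length_take, List.length_nil] at this; omega
        rw [List.head_append_left htake]
        have : (c.take t).head htake = c.get ⟨0, List.length_pos_iff.mpr hcne⟩ := by
          simp only [List.head_eq_getElem, List.get_eq_getElem]
          exact List.getElem_take
        rw [this, hsrc0]
    rw [hhead]
    exact hcc

end Aux


/-- Local contraction: if every finite path of `E_A` can be enlarged to a cycle and `E_A`
satisfies Condition (L), then every nonempty open subset of `X_A` contains a cylinder
`W_c` over a cycle `c` which is mapped properly into itself by prepending `c`. -/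
theorem locally_contracting (ι : Type) [Countable ι] [Nonempty ι] (A : ι → ι → ℕ)
    (hfin : ∀ i, {j | 1 ≤ A i j}.Finite) (hrow : ∀ i, ∃ j, 1 ≤ A i j)
    (hcyc : ∀ (μ : List (Edge ι A)) (hμ : μ ≠ []), IsPathList μ →
      ∃ (ν : List (Edge ι A)) (hν : ν ≠ []), IsPathList ν ∧
        pSrc ν hν = pTgt μ hμ ∧ pTgt ν hν = pSrc μ hμ)
    (hL : ∀ c : List (Edge ι A), IsCycle c → HasExit c)
    (U : Set (PathSpace ι A)) (hU : IsOpen U) (hne : U.Nonempty) :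
    ∃ c : List (Edge ι A), IsCycle c ∧ Cyl c ⊆ U ∧
      {y : PathSpace ι A | ∃ x ∈ Cyl c, y.1 = prepend c x.1} ⊂ Cyl c := by
  obtain ⟨x, hx⟩ := hne
  -- Step 1: find a cylinder around x inside U
  obtain ⟨V, hV, hVU⟩ := isOpen_induced_iff.mp hU
  have hxV : x.1 ∈ V := by rw [← hVU] at hx; exact hx
  obtain ⟨I, u, hIu, hsub⟩ := isOpen_pi_iff.mp hV x.1 hxV
  set n : ℕ := max (I.sup id + 1) 1 with hn
  have hn1 : 1 ≤ n := le_max_right _ _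
  set μ : List (Edge ι A) := List.ofFn (fun k : Fin n => x.1 k) with hμdef
  have hlen : μ.length = n := List.length_ofFn
  have hμne : μ ≠ [] := by
    intro h; rw [h] at hlen; simp at hlen; omega
  have hμget : ∀ (s : ℕ) (hs : s < μ.length), μ.get ⟨s, hs⟩ = x.1 s := by
    intro s hs
    simp [hμdef, List.get_ofFn]
  have hμpath : IsPathList μ := by
    rw [IsPathList, List.Chain', List.isChain_iff_getElem]
    intro i hi
    show (μ.get ⟨i, by omega⟩).tgt = (μ.get ⟨i+1, hi⟩).src
    rw [hμget i (by omega), hμget (i+1) (by omega)]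
    exact x.2 i
  have hCylμ : Cyl μ ⊆ U := by
    intro y hy
    rw [← hVU]
    apply hsub
    intro i hi
    have hin : i < n := by
      have : i ≤ I.sup id := Finset.le_sup (f := id) hi
      omega
    have : y.1 i = x.1 i := by
      rw [hy i (by omega), hμget i (by omega)]
    rw [this]
    exact (hIu i hi).2
  clear hμdef hlen hn hn1 hμget hsub hIu hxV hVU hx
  -- Step 2: close μ up to a cycle
  obtain ⟨ν, hνne, hνpath, hνsrc, hνtgt⟩ := hcyc μ hμne hμpath
  have hcne : μ ++ ν ≠ [] := by simp [hμne]
  have hcpath : IsPathList (μ ++ ν) := by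
    rw [IsPathList, List.Chain', List.isChain_append]
    refine ⟨hμpath, hνpath, ?_⟩
    intro a ha b hb
    rw [List.getLast?_eq_getLast hμne, Option.mem_def, Option.some.injEq] at ha
    rw [List.head?_eq_head hνne, Option.mem_def, Option.some.injEq] at hb
    subst ha; subst hb
    exact hνsrc.symm
  have hcc : pTgt (μ ++ ν) hcne = pSrc (μ ++ ν) hcne := by
    have h1 : pTgt (μ ++ ν) hcne = pTgt ν hνne := by
      unfold pTgt
      rw [List.getLast_append]
      simp [hνne]
    have h2 : pSrc (μ ++ ν) hcne = pSrc μ hμne := by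
      unfold pSrc
      rw [List.head_append_left hμne]
    rw [h1, h2, hνtgt]
  have hccyc : IsCycle (μ ++ ν) := ⟨hcne, hcpath, hcc⟩
  have hCylc : Cyl (μ ++ ν) ⊆ Cyl μ := by
    intro y hy s hs
    have hs' : s < (μ ++ ν).length := by simp; omega
    rw [hy s hs']
    simp only [List.get_eq_getElem]
    exact List.getElem_append_left hs
  -- Step 3: an exit of the cycle, and the witness path z
  obtain ⟨e, t, ht, hesrc, hene⟩ := hL (μ ++ ν) hccyc
  have ht' : t < μ.length + ν.length := by simpa using ht
  have hLp := cycle_exit_path (μ ++ ν) hcne hcpath hcc e t ht hesrc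
  have hLne2 : (μ ++ ν) ++ ((μ ++ ν).take t ++ [e]) ≠ [] := by simp [hμne]
  obtain ⟨z, hz⟩ := exists_path_extension hrow _ hLne2 hLp
  have hLlen : ((μ ++ ν) ++ ((μ ++ ν).take t ++ [e])).length
      = (μ ++ ν).length + t + 1 := by
    simp [List.length_take]
    omega
  have hclen : (μ ++ ν).length = μ.length + ν.length := by simp
  have hzc : z ∈ Cyl (μ ++ ν) := by
    intro s hs
    have hs2 : s < ((μ ++ ν) ++ ((μ ++ ν).take t ++ [e])).length := by
      rw [hLlen]; omega
    rw [hz s hs2]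
    simp only [List.get_eq_getElem]
    exact List.getElem_append_left hs
  have hzkey : z.1 ((μ ++ ν).length + t) = e := by
    have hs2 : (μ ++ ν).length + t
        < ((μ ++ ν) ++ ((μ ++ ν).take t ++ [e])).length := by
      rw [hLlen]; omega
    rw [hz _ hs2]
    simp only [List.get_eq_getElem]
    rw [List.getElem_append_right (by omega)]
    rw [List.getElem_append_right (by rw [List.length_take]; omega)]
    exact List.getElem_singleton _
  have himg : {y : PathSpace ι A | ∃ x ∈ Cyl (μ ++ ν), y.1 = prepend (μ ++ ν) x.1}
      ⊆ Cyl (μ ++ ν) := by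
    rintro y ⟨x', -, hyx⟩ s hs
    rw [hyx]
    show prepend (μ ++ ν) x'.1 s = _
    rw [prepend, dif_pos hs]
  have hznot : z ∉ {y : PathSpace ι A | ∃ x ∈ Cyl (μ ++ ν), y.1 = prepend (μ ++ ν) x.1} := by
    rintro ⟨x', hx', hzx⟩
    have h1 : z.1 ((μ ++ ν).length + t) = x'.1 t := by
      rw [hzx]
      show prepend (μ ++ ν) x'.1 _ = _
      rw [prepend, dif_neg (by omega)]
      have hidx : (μ ++ ν).length + t - (μ ++ ν).length = t := by omega
      rw [hidx]
    rw [hzkey, hx' t ht] at h1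
    exact hene h1
  refine ⟨μ ++ ν, hccyc, fun y hy => hCylμ (hCylc hy), ?_⟩
  rw [Set.ssubset_def]
  exact ⟨himg, fun hsup => hznot (hsup hzc)⟩
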